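/- arXiv:1710.10924 — 3 statements merged into one kernel-verified Lean document; each statement's English description precedes it below -/
import Mathlib

section
/- Let p and q be positive real numbers. If there exists a strictly isomorphic rectangle partition pair for (p,q) of some finite size, then there exists a strictly isomorphic rectangle partition pair for (p,q) of some finite size in which the partition of [0,p]×[0,q] is a slat rectangle partition. -/
open scoped Classical

/-- An axis-parallel rectangle in the plane, given by its coordinates. -/
structure Rect where
  x1 : ℝ
  x2 : ℝ
  y1 : ℝ
  y2 : ℝ

namespace Rect

/-- The horizontal side length. -/
def width (r : Rect) : ℝ := r.x2 - r.x1

/-- The vertical side length. -/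
def height (r : Rect) : ℝ := r.y2 - r.y1

/-- The closed rectangle as a set of points. -/
def carrier (r : Rect) : Set (ℝ × ℝ) := Set.Icc r.x1 r.x2 ×ˢ Set.Icc r.y1 r.y2

/-- The interior of the rectangle. -/
def inner (r : Rect) : Set (ℝ × ℝ) := Set.Ioo r.x1 r.x2 ×ˢ Set.Ioo r.y1 r.y2

/-- The rectangle is nondegenerate. -/
def Nondeg (r : Rect) : Prop := r.x1 < r.x2 ∧ r.y1 < r.y2

end Rect

/-- `P` is a rectangle partition of `[0, W] × [0, H]`: finitely many nondegenerate
rectangles with pairwise disjoint interiors whose union is `[0, W] × [0, H]`. -/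
def IsRectPartition {k : ℕ} (W H : ℝ) (P : Fin k → Rect) : Prop :=
  (∀ i, (P i).Nondeg) ∧
  (∀ i j : Fin k, i ≠ j → (P i).inner ∩ (P j).inner = ∅) ∧
  (⋃ i, (P i).carrier) = Set.Icc (0 : ℝ) W ×ˢ Set.Icc (0 : ℝ) H

/-- `P1`, `P2`, `σ` form a strictly isomorphic rectangle partition pair between the
rectangles `a × b` and `c × d`: matched modules have equal width and equal height. -/
def IsStrictIsoPair (a b c d : ℝ) {k : ℕ} (P1 P2 : Fin k → Rect)
    (σ : Equiv.Perm (Fin k)) : Prop :=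
  IsRectPartition a b P1 ∧ IsRectPartition c d P2 ∧
  ∀ i, (P1 i).width = (P2 (σ i)).width ∧ (P1 i).height = (P2 (σ i)).height

/-- There is a strictly isomorphic rectangle partition pair between `a × b` and `c × d`
of size `k`. -/
def StrictPairGen (a b c d : ℝ) (k : ℕ) : Prop :=
  ∃ (P1 P2 : Fin k → Rect) (σ : Equiv.Perm (Fin k)), IsStrictIsoPair a b c d P1 P2 σ

/-- A strictly isomorphic rectangle partition pair for `(p, q)` of size `k`:
partitions of `[0,p] × [0,q]` and `[0,q] × [0,p]` with a matching preserving
widths and heights. -/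
def StrictPair (p q : ℝ) (k : ℕ) : Prop := StrictPairGen p q q p k

/-- An isomorphic rectangle partition pair (rotation allowed) between `a × b` and
`c × d` of size `k`: matched modules have the same unordered pair of side lengths. -/
def IsoPairRot (a b c d : ℝ) (k : ℕ) : Prop :=
  ∃ (P1 P2 : Fin k → Rect) (σ : Equiv.Perm (Fin k)),
    IsRectPartition a b P1 ∧ IsRectPartition c d P2 ∧
    ∀ i, ((P1 i).width = (P2 (σ i)).width ∧ (P1 i).height = (P2 (σ i)).height) ∨
         ((P1 i).width = (P2 (σ i)).height ∧ (P1 i).height = (P2 (σ i)).width)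

/-- A slat rectangle partition: if horizontal sides of two modules lie on the same
horizontal line and overlap in more than one point, they are identical segments. -/
def IsSlat {k : ℕ} (P : Fin k → Rect) : Prop :=
  ∀ i j : Fin k, ∀ yi ∈ ({(P i).y1, (P i).y2} : Set ℝ),
    ∀ yj ∈ ({(P j).y1, (P j).y2} : Set ℝ), yi = yj →
      max (P i).x1 (P j).x1 < min (P i).x2 (P j).x2 →
      (P i).x1 = (P j).x1 ∧ (P i).x2 = (P j).x2

namespace SrtpAux

/-- Extend a family of rectangles by one more rectangle. -/
noncomputable def extend {k : ℕ} (F : Fin k → Rect) (s : Rect) : Fin (k + 1) → Rect :=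
  fun j => Sum.elim F (fun _ => s) (finSumFinEquiv.symm j)

lemma extend_apply {k : ℕ} (F : Fin k → Rect) (s : Rect) (z : Fin k ⊕ Fin 1) :
    extend F s (finSumFinEquiv z) = Sum.elim F (fun _ => s) z := by
  simp [extend]

lemma extend_castAdd {k : ℕ} (F : Fin k → Rect) (s : Rect) (a : Fin k) :
    extend F s (Fin.castAdd 1 a) = F a := extend_apply F s (Sum.inl a)

lemma extend_natAdd {k : ℕ} (F : Fin k → Rect) (s : Rect) (b : Fin 1) :
    extend F s (Fin.natAdd k b) = s := extend_apply F s (Sum.inr b)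

lemma sum_extend {k : ℕ} (F : Fin k → Rect) (s : Rect) (g : Rect → ℕ) :
    ∑ j, g (extend F s j) = (∑ a, g (F a)) + g s := by
  rw [← Equiv.sum_comp (finSumFinEquiv : Fin k ⊕ Fin 1 ≃ Fin (k+1))
    (fun j => g (extend F s j))]
  rw [Fintype.sum_sum_type]
  simp [extend_castAdd, extend_natAdd]

lemma iUnion_extend {k : ℕ} (F : Fin k → Rect) (s : Rect) :
    (⋃ j, (extend F s j).carrier) = (⋃ a, (F a).carrier) ∪ s.carrier := by
  rw [← (finSumFinEquiv : Fin k ⊕ Fin 1 ≃ Fin (k+1)).surjective.iUnion_comp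
    (fun j => (extend F s j).carrier)]
  simp only [extend_apply]
  rw [Set.iUnion_sum]
  simp [Set.iUnion_const]

lemma inter_empty_of_subset {A B C D : Set (ℝ × ℝ)} (h : C ∩ D = ∅)
    (hA : A ⊆ C) (hB : B ⊆ D) : A ∩ B = ∅ :=
  Set.eq_empty_of_subset_empty (h ▸ Set.inter_subset_inter hA hB)

/-- The left piece of a vertical cut. -/
def lpiece (r : Rect) (c : ℝ) : Rect := ⟨r.x1, c, r.y1, r.y2⟩
/-- The right piece of a vertical cut. -/
def rpiece (r : Rect) (c : ℝ) : Rect := ⟨c, r.x2, r.y1, r.y2⟩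

lemma lpiece_inner_subset {r : Rect} {c : ℝ} (h2 : c ≤ r.x2) :
    (lpiece r c).inner ⊆ r.inner :=
  Set.prod_mono (Set.Ioo_subset_Ioo_right h2) le_rfl

lemma rpiece_inner_subset {r : Rect} {c : ℝ} (h1 : r.x1 ≤ c) :
    (rpiece r c).inner ⊆ r.inner :=
  Set.prod_mono (Set.Ioo_subset_Ioo_left h1) le_rfl

lemma piece_inner_disjoint (r : Rect) (c : ℝ) :
    (lpiece r c).inner ∩ (rpiece r c).inner = ∅ := by
  rw [Set.eq_empty_iff_forall_notMem]
  rintro ⟨x, y⟩ ⟨h1, h2⟩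
  simp only [Rect.inner, lpiece, rpiece, Set.mem_prod, Set.mem_Ioo] at h1 h2
  linarith [h1.1.2, h2.1.1]

lemma piece_carrier_union {r : Rect} {c : ℝ} (h1 : r.x1 ≤ c) (h2 : c ≤ r.x2) :
    (lpiece r c).carrier ∪ (rpiece r c).carrier = r.carrier := by
  simp only [Rect.carrier, lpiece, rpiece]
  rw [← Set.union_prod, Set.Icc_union_Icc_eq_Icc h1 h2]

/-- Splitting the `i`-th module of a partition into two pieces gives a partition. -/
lemma split_partition {k : ℕ} {W H : ℝ} {P : Fin k → Rect} (hP : IsRectPartition W H P)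
    (i : Fin k) {c : ℝ} (h1 : (P i).x1 < c) (h2 : c < (P i).x2) :
    IsRectPartition W H (extend (Function.update P i (lpiece (P i) c)) (rpiece (P i) c)) := by
  obtain ⟨hnd, hdisj, hun⟩ := hP
  set r := lpiece (P i) c with hr
  set s := rpiece (P i) c with hs
  have hndi := hnd i
  have hrnd : r.Nondeg := ⟨h1, hndi.2⟩
  have hsnd : s.Nondeg := ⟨h2, hndi.2⟩
  have hrsub : r.inner ⊆ (P i).inner := lpiece_inner_subset h2.le
  have hssub : s.inner ⊆ (P i).inner := rpiece_inner_subset h1.le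
  refine ⟨?_, ?_, ?_⟩
  · intro j
    obtain ⟨z, rfl⟩ := finSumFinEquiv.surjective j
    rw [extend_apply]
    cases z with
    | inl a =>
      by_cases hai : a = i
      · subst hai; simpa [Function.update_self] using hrnd
      · simpa [Function.update_of_ne hai] using hnd a
    | inr b => exact hsnd
  · intro j1 j2 hne
    obtain ⟨z1, rfl⟩ := finSumFinEquiv.surjective j1
    obtain ⟨z2, rfl⟩ := finSumFinEquiv.surjective j2
    have hzne : z1 ≠ z2 := fun h => hne (by rw [h])
    rw [extend_apply, extend_apply]
    have key : ∀ a : Fin k, (Function.update P i r a).inner ⊆ (P a).inner ∧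
        ((Function.update P i r a).inner ⊆ (P i).inner ∨
          (Function.update P i r a).inner ∩ (P i).inner = ∅) := by
      intro a
      by_cases hai : a = i
      · subst hai; rw [Function.update_self]; exact ⟨hrsub, Or.inl hrsub⟩
      · rw [Function.update_of_ne hai]
        exact ⟨le_rfl, Or.inr (hdisj a i hai)⟩
    cases z1 with
    | inl a =>
      cases z2 with
      | inl b =>
        have hab : a ≠ b := fun h => hzne (by rw [h])
        simp only [Sum.elim_inl]
        by_cases hai : a = i
        · subst hai
          rw [Function.update_self, Function.update_of_ne (Ne.symm hab)]
          exact inter_empty_of_subset (hdisj a b hab) hrsub le_rfl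
        · by_cases hbi : b = i
          · subst hbi
            rw [Function.update_of_ne hai, Function.update_self]
            exact inter_empty_of_subset (hdisj a b hab) le_rfl hrsub
          · rw [Function.update_of_ne hai, Function.update_of_ne hbi]
            exact hdisj a b hab
      | inr b =>
        simp only [Sum.elim_inl, Sum.elim_inr]
        by_cases hai : a = i
        · subst hai; rw [Function.update_self]; exact piece_inner_disjoint _ _
        · rw [Function.update_of_ne hai]
          exact inter_empty_of_subset (hdisj a i hai) le_rfl hssub
    | inr b =>
      cases z2 with
      | inl a =>
        simp only [Sum.elim_inl, Sum.elim_inr]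
        by_cases hai : a = i
        · subst hai; rw [Function.update_self]
          rw [Set.inter_comm]; exact piece_inner_disjoint _ _
        · rw [Function.update_of_ne hai, Set.inter_comm]
          exact inter_empty_of_subset (hdisj a i hai) le_rfl hssub
      | inr b2 =>
        exact absurd (Subsingleton.elim b b2) (fun h => hzne (by rw [h]))
  · rw [iUnion_extend, ← hun]
    ext pt
    simp only [Set.mem_union, Set.mem_iUnion]
    constructor
    · rintro (⟨a, ha⟩ | hss)
      · by_cases hai : a = i
        · subst hai
          rw [Function.update_self] at ha
          exact ⟨a, (piece_carrier_union h1.le h2.le) ▸ Or.inl ha⟩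
        · rw [Function.update_of_ne hai] at ha
          exact ⟨a, ha⟩
      · exact ⟨i, (piece_carrier_union h1.le h2.le) ▸ Or.inr hss⟩
    · rintro ⟨a, ha⟩
      by_cases hai : a = i
      · subst hai
        rw [← piece_carrier_union h1.le h2.le (r := P a) (c := c)] at ha
        cases ha with
        | inl h => exact Or.inl ⟨a, by rw [Function.update_self]; exact h⟩
        | inr h => exact Or.inr h
      · exact Or.inl ⟨a, by rw [Function.update_of_ne hai]; exact ha⟩

end SrtpAux

namespace SrtpAux

/-- The set of all x-coordinates of modules. -/
noncomputable def Xset {k : ℕ} (P : Fin k → Rect) : Finset ℝ :=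
  (Finset.univ.image fun i => (P i).x1) ∪ (Finset.univ.image fun i => (P i).x2)

lemma x1_mem_Xset {k : ℕ} (P : Fin k → Rect) (i : Fin k) : (P i).x1 ∈ Xset P := by
  simp [Xset]

lemma x2_mem_Xset {k : ℕ} (P : Fin k → Rect) (i : Fin k) : (P i).x2 ∈ Xset P := by
  simp [Xset]

/-- The number of coordinates in `X` strictly inside the x-extent of `r`. -/
noncomputable def cnt (X : Finset ℝ) (r : Rect) : ℕ :=
  (X.filter fun x => r.x1 < x ∧ x < r.x2).card

noncomputable def ν (X : Finset ℝ) {k : ℕ} (P : Fin k → Rect) : ℕ := ∑ i, cnt X (P i)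

noncomputable def μ {k : ℕ} (P : Fin k → Rect) : ℕ := ν (Xset P) P

lemma cnt_mono {X X' : Finset ℝ} (h : X ⊆ X') (r : Rect) : cnt X r ≤ cnt X' r :=
  Finset.card_le_card (Finset.filter_subset_filter _ h)

lemma ν_mono {X X' : Finset ℝ} (h : X ⊆ X') {k : ℕ} (P : Fin k → Rect) :
    ν X P ≤ ν X' P :=
  Finset.sum_le_sum fun i _ => cnt_mono h (P i)

lemma cnt_split {X : Finset ℝ} {r : Rect} {c : ℝ} (hc : c ∈ X)
    (h1 : r.x1 < c) (h2 : c < r.x2) :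
    cnt X (lpiece r c) + cnt X (rpiece r c) + 1 ≤ cnt X r := by
  have hdisj : Disjoint (X.filter fun x => (lpiece r c).x1 < x ∧ x < (lpiece r c).x2)
      (X.filter fun x => (rpiece r c).x1 < x ∧ x < (rpiece r c).x2) := by
    rw [Finset.disjoint_filter]
    intro x _ hx1
    simp only [lpiece, rpiece] at hx1 ⊢
    rintro ⟨h, -⟩
    linarith [hx1.2]
  have hsub : (X.filter fun x => (lpiece r c).x1 < x ∧ x < (lpiece r c).x2) ∪
      (X.filter fun x => (rpiece r c).x1 < x ∧ x < (rpiece r c).x2) ⊆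
      (X.filter fun x => r.x1 < x ∧ x < r.x2).erase c := by
    intro x hx
    rw [Finset.mem_union] at hx
    rw [Finset.mem_erase]
    rcases hx with hx | hx <;> rw [Finset.mem_filter] at hx <;>
      simp only [lpiece, rpiece] at hx
    · exact ⟨ne_of_lt hx.2.2, Finset.mem_filter.2 ⟨hx.1, hx.2.1, lt_trans hx.2.2 h2⟩⟩
    · exact ⟨(ne_of_lt hx.2.1).symm, Finset.mem_filter.2 ⟨hx.1, lt_trans h1 hx.2.1, hx.2.2⟩⟩
  have hcmem : c ∈ X.filter fun x => r.x1 < x ∧ x < r.x2 :=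
    Finset.mem_filter.2 ⟨hc, h1, h2⟩
  calc cnt X (lpiece r c) + cnt X (rpiece r c) + 1
      = ((X.filter fun x => (lpiece r c).x1 < x ∧ x < (lpiece r c).x2) ∪
        (X.filter fun x => (rpiece r c).x1 < x ∧ x < (rpiece r c).x2)).card + 1 := by
        rw [Finset.card_union_of_disjoint hdisj]; rfl
    _ ≤ ((X.filter fun x => r.x1 < x ∧ x < r.x2).erase c).card + 1 :=
        Nat.add_le_add_right (Finset.card_le_card hsub) 1
    _ = cnt X r := Finset.card_erase_add_one hcmem

/-- The coordinates of the split family are among the old ones (plus `c`, which is old). -/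
lemma Xset_split_subset {k : ℕ} (P : Fin k → Rect) (i : Fin k) {c : ℝ} (hc : c ∈ Xset P) :
    Xset (extend (Function.update P i (lpiece (P i) c)) (rpiece (P i) c)) ⊆ Xset P := by
  intro x hx
  simp only [Xset, Finset.mem_union, Finset.mem_image, Finset.mem_univ, true_and] at hx
  rcases hx with ⟨j, rfl⟩ | ⟨j, rfl⟩ <;>
  · obtain ⟨z, rfl⟩ := finSumFinEquiv.surjective j
    rw [extend_apply]
    cases z with
    | inl a =>
      by_cases hai : a = i
      · subst hai
        simp only [Sum.elim_inl, Function.update_self, lpiece]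
        first
          | exact x1_mem_Xset P a
          | exact hc
          | exact x2_mem_Xset P a
      · simp only [Sum.elim_inl, Function.update_of_ne hai]
        first
          | exact x1_mem_Xset P a
          | exact x2_mem_Xset P a
    | inr b =>
      simp only [Sum.elim_inr, rpiece]
      first
        | exact hc
        | exact x1_mem_Xset P i
        | exact x2_mem_Xset P i

lemma μ_split_lt {k : ℕ} (P : Fin k → Rect) (i : Fin k) {c : ℝ} (hc : c ∈ Xset P)
    (h1 : (P i).x1 < c) (h2 : c < (P i).x2) :
    μ (extend (Function.update P i (lpiece (P i) c)) (rpiece (P i) c)) < μ P := by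
  set Q := extend (Function.update P i (lpiece (P i) c)) (rpiece (P i) c) with hQ
  have step1 : μ Q ≤ ν (Xset P) Q := ν_mono (Xset_split_subset P i hc) Q
  have step2 : ν (Xset P) Q < ν (Xset P) P := by
    have hsum : ν (Xset P) Q =
        (∑ a, cnt (Xset P) (Function.update P i (lpiece (P i) c) a)) +
          cnt (Xset P) (rpiece (P i) c) := sum_extend _ _ _
    have hupd : (∑ a, cnt (Xset P) (Function.update P i (lpiece (P i) c) a)) =
        cnt (Xset P) (lpiece (P i) c) + ∑ a ∈ Finset.univ.erase i, cnt (Xset P) (P a) := by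
      rw [← Finset.add_sum_erase _
        (fun a => cnt (Xset P) (Function.update P i (lpiece (P i) c) a)) (Finset.mem_univ i)]
      rw [Function.update_self]
      congr 1
      exact Finset.sum_congr rfl fun a ha => by
        rw [Function.update_of_ne (Finset.mem_erase.1 ha).1]
    have hP : ν (Xset P) P = cnt (Xset P) (P i) + ∑ a ∈ Finset.univ.erase i, cnt (Xset P) (P a) :=
      (Finset.add_sum_erase _ _ (Finset.mem_univ i)).symm
    have hkey := cnt_split hc h1 h2
    omega
  exact lt_of_le_of_lt step1 step2

end SrtpAux

namespace SrtpAux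

lemma slat_of_mu_zero {k : ℕ} {P : Fin k → Rect} (h0 : μ P = 0) : IsSlat P := by
  have h0' : (∑ i : Fin k, cnt (Xset P) (P i)) = 0 := h0
  have hcnt : ∀ i : Fin k, cnt (Xset P) (P i) = 0 := by
    intro i
    exact Finset.sum_eq_zero_iff.1 h0' i (Finset.mem_univ i)
  have hno : ∀ (i : Fin k) (x : ℝ), x ∈ Xset P → ¬((P i).x1 < x ∧ x < (P i).x2) := by
    intro i x hx hcontra
    have : x ∈ (Xset P).filter fun x => (P i).x1 < x ∧ x < (P i).x2 :=
      Finset.mem_filter.2 ⟨hx, hcontra⟩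
    have hcard := hcnt i
    rw [cnt, Finset.card_eq_zero] at hcard
    rw [hcard] at this
    exact absurd this (Finset.notMem_empty x)
  intro i j _ _ _ _ _ hover
  have f1 : (P j).x1 < (P i).x2 :=
    lt_of_le_of_lt (le_max_right _ _) (lt_of_lt_of_le hover (min_le_left _ _))
  have f2 : (P i).x1 < (P j).x2 :=
    lt_of_le_of_lt (le_max_left _ _) (lt_of_lt_of_le hover (min_le_right _ _))
  constructor
  · rcases lt_trichotomy (P i).x1 (P j).x1 with h | h | h
    · exact absurd ⟨h, f1⟩ (hno i _ (x1_mem_Xset P j))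
    · exact h
    · exact absurd ⟨h, f2⟩ (hno j _ (x1_mem_Xset P i))
  · rcases lt_trichotomy (P i).x2 (P j).x2 with h | h | h
    · exact absurd ⟨f1, h⟩ (hno j _ (x2_mem_Xset P i))
    · exact h
    · exact absurd ⟨f2, h⟩ (hno i _ (x2_mem_Xset P j))

/-- Extend a permutation of `Fin k` to `Fin (k+1)`, fixing the new element. -/
noncomputable def permExt {k : ℕ} (σ : Equiv.Perm (Fin k)) : Equiv.Perm (Fin (k + 1)) :=
  (finSumFinEquiv.symm).trans ((σ.sumCongr (Equiv.refl (Fin 1))).trans finSumFinEquiv)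

lemma permExt_inl {k : ℕ} (σ : Equiv.Perm (Fin k)) (a : Fin k) :
    permExt σ (finSumFinEquiv (Sum.inl a)) = finSumFinEquiv (Sum.inl (σ a)) := by
  simp [permExt]

lemma permExt_inr {k : ℕ} (σ : Equiv.Perm (Fin k)) (b : Fin 1) :
    permExt σ (finSumFinEquiv (Sum.inr b)) = finSumFinEquiv (Sum.inr b) := by
  simp [permExt]

lemma main_induction (p q : ℝ) :
    ∀ n k (P1 P2 : Fin k → Rect) (σ : Equiv.Perm (Fin k)),
      IsStrictIsoPair p q q p P1 P2 σ → μ P1 < n →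
      ∃ (k' : ℕ) (P1' P2' : Fin k' → Rect) (σ' : Equiv.Perm (Fin k')),
        IsStrictIsoPair p q q p P1' P2' σ' ∧ IsSlat P1' := by
  intro n
  induction n with
  | zero => intro k P1 P2 σ _ hlt; omega
  | succ n IH =>
    intro k P1 P2 σ hiso hlt
    by_cases h0 : μ P1 = 0
    · exact ⟨k, P1, P2, σ, hiso, slat_of_mu_zero h0⟩
    · -- find a module and a cut point
      obtain ⟨hpart1, hpart2, hmatch⟩ := hiso
      have h0' : (∑ i : Fin k, cnt (Xset P1) (P1 i)) ≠ 0 := h0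
      have : ∃ i : Fin k, cnt (Xset P1) (P1 i) ≠ 0 := by
        by_contra hcon
        push_neg at hcon
        exact h0' (Finset.sum_eq_zero fun i _ => hcon i)
      obtain ⟨i, hi⟩ := this
      have : ∃ c ∈ Xset P1, (P1 i).x1 < c ∧ c < (P1 i).x2 := by
        have hpos : 0 < ((Xset P1).filter fun x => (P1 i).x1 < x ∧ x < (P1 i).x2).card :=
          Nat.pos_of_ne_zero hi
        obtain ⟨c, hc⟩ := Finset.card_pos.1 hpos
        rw [Finset.mem_filter] at hc
        exact ⟨c, hc.1, hc.2⟩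
      obtain ⟨c, hcX, hc1, hc2⟩ := this
      -- set up the matched cut in P2
      set m : Fin k := σ i with hm
      set c2 : ℝ := (P2 m).x1 + (c - (P1 i).x1) with hc2def
      have hw : (P1 i).width = (P2 m).width := (hmatch i).1
      have hh : (P1 i).height = (P2 m).height := (hmatch i).2
      have hc21 : (P2 m).x1 < c2 := by
        rw [hc2def]; linarith
      have hc22 : c2 < (P2 m).x2 := by
        have : (P1 i).x2 - (P1 i).x1 = (P2 m).x2 - (P2 m).x1 := hw
        rw [hc2def]; linarith
      -- the new families
      set Q1 := extend (Function.update P1 i (lpiece (P1 i) c)) (rpiece (P1 i) c) with hQ1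
      set Q2 := extend (Function.update P2 m (lpiece (P2 m) c2)) (rpiece (P2 m) c2) with hQ2
      have hQ1part : IsRectPartition p q Q1 := split_partition hpart1 i hc1 hc2
      have hQ2part : IsRectPartition q p Q2 := split_partition hpart2 m hc21 hc22
      have hmatch' : ∀ j, (Q1 j).width = (Q2 (permExt σ j)).width ∧
          (Q1 j).height = (Q2 (permExt σ j)).height := by
        intro j
        obtain ⟨z, rfl⟩ := finSumFinEquiv.surjective j
        cases z with
        | inl a =>
          rw [permExt_inl]
          rw [hQ1, hQ2, extend_apply, extend_apply]
          simp only [Sum.elim_inl]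
          by_cases hai : a = i
          · subst hai
            rw [Function.update_self, Function.update_self]
            constructor
            · simp only [Rect.width, lpiece, hc2def]; ring
            · simpa only [Rect.height, lpiece] using hh
          · have hσ : σ a ≠ m := fun h => hai (σ.injective (h.trans hm))
            rw [Function.update_of_ne hai, Function.update_of_ne hσ]
            exact hmatch a
        | inr b =>
          rw [permExt_inr]
          rw [hQ1, hQ2, extend_apply, extend_apply]
          simp only [Sum.elim_inr]
          constructor
          · simp only [Rect.width, rpiece, hc2def]
            have : (P1 i).x2 - (P1 i).x1 = (P2 m).x2 - (P2 m).x1 := hw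
            linarith
          · simpa only [Rect.height, rpiece] using hh
      have hmu : μ Q1 < μ P1 := μ_split_lt P1 i hcX hc1 hc2
      exact IH (k + 1) Q1 Q2 (permExt σ) ⟨hQ1part, hQ2part, hmatch'⟩ (by omega)

end SrtpAux


/-- If `SRTP(p,q)` has a solution, it has one whose partition of `[0,p] × [0,q]`
is a slat rectangle partition. -/
theorem srtp_slat_solution (p q : ℝ) (hp : 0 < p) (hq : 0 < q)
    (h : ∃ k : ℕ, StrictPair p q k) :
    ∃ (k : ℕ) (P1 P2 : Fin k → Rect) (σ : Equiv.Perm (Fin k)),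
      IsStrictIsoPair p q q p P1 P2 σ ∧ IsSlat P1 := by
  obtain ⟨k, P1, P2, σ, hiso⟩ := h
  exact SrtpAux.main_induction p q (SrtpAux.μ P1 + 1) k P1 P2 σ hiso (by omega)
end

section
/- (Scanning argument.) Let W and H be positive real numbers and let π be a rectangle partition of [0,W]×[0,H] whose set of distinct module widths is linearly independent over the rational numbers. Then for every width x occurring among the modules of π, there is a nonnegative integer t such that the sum of the heights of all modules of π of width x equals t·H. -/
open scoped Classical ENNReal
open MeasureTheory

lemma sum_length_of_cover {ι : Type*} (a b : ι → ℝ) (s : Finset ι) (c d : ℝ)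
    (hcd : c ≤ d)
    (hab : ∀ i ∈ s, a i ≤ b i)
    (hsub : ∀ i ∈ s, Set.Ioo (a i) (b i) ⊆ Set.Icc c d)
    (hcover : Set.Icc c d ⊆ (⋃ i ∈ s, Set.Ioo (a i) (b i)) ∪ ↑(s.image a ∪ s.image b))
    (hdisj : (↑s : Set ι).PairwiseDisjoint (fun i => Set.Ioo (a i) (b i))) :
    ∑ i ∈ s, (b i - a i) = d - c := by
  have hmeas : volume (⋃ i ∈ s, Set.Ioo (a i) (b i)) = ∑ i ∈ s, ENNReal.ofReal (b i - a i) := by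
    rw [measure_biUnion_finset hdisj (fun i _ => measurableSet_Ioo)]
    simp [Real.volume_Ioo]
  have h1 : volume (⋃ i ∈ s, Set.Ioo (a i) (b i)) ≤ volume (Set.Icc c d) :=
    measure_mono (Set.iUnion₂_subset hsub)
  have h2 : volume (Set.Icc c d) ≤ volume (⋃ i ∈ s, Set.Ioo (a i) (b i)) := by
    calc volume (Set.Icc c d)
        ≤ volume ((⋃ i ∈ s, Set.Ioo (a i) (b i)) ∪ ↑(s.image a ∪ s.image b)) :=
          measure_mono hcover
      _ ≤ volume (⋃ i ∈ s, Set.Ioo (a i) (b i)) + volume (↑(s.image a ∪ s.image b) : Set ℝ) :=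
          measure_union_le _ _
      _ = volume (⋃ i ∈ s, Set.Ioo (a i) (b i)) := by
          rw [(Finset.countable_toSet _).measure_zero, add_zero]
  have heq : volume (⋃ i ∈ s, Set.Ioo (a i) (b i)) = volume (Set.Icc c d) := le_antisymm h1 h2
  rw [hmeas, Real.volume_Icc] at heq
  rw [← ENNReal.ofReal_sum_of_nonneg (fun i hi => sub_nonneg.2 (hab i hi))] at heq
  exact (ENNReal.ofReal_eq_ofReal_iff
    (Finset.sum_nonneg (fun i hi => sub_nonneg.2 (hab i hi))) (sub_nonneg.2 hcd)).1 heq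

lemma sum_length_eq_card_mul {ι : Type*} (a b : ι → ℝ) (F : Finset ι) (H : ℝ) (hH : 0 ≤ H)
    (t : ℕ) (B : Finset ℝ)
    (hab : ∀ i ∈ F, a i ≤ b i)
    (hsub : ∀ i ∈ F, Set.Ioo (a i) (b i) ⊆ Set.Ioo 0 H)
    (hcard : ∀ u ∈ Set.Ioo (0:ℝ) H, u ∉ (↑B : Set ℝ) →
      (F.filter (fun i => u ∈ Set.Ioo (a i) (b i))).card = t) :
    ∑ i ∈ F, (b i - a i) = (t : ℝ) * H := by
  have key : ∑ i ∈ F, ENNReal.ofReal (b i - a i) = (t : ℝ≥0∞) * ENNReal.ofReal H := by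
    have h1 : ∀ i ∈ F, ENNReal.ofReal (b i - a i)
        = ∫⁻ u, (Set.Ioo (a i) (b i)).indicator (fun _ => (1:ℝ≥0∞)) u := by
      intro i _
      rw [lintegral_indicator measurableSet_Ioo]
      simp [Real.volume_Ioo]
    rw [Finset.sum_congr rfl h1,
      ← lintegral_finset_sum' F (fun i _ => (measurable_const.indicator measurableSet_Ioo).aemeasurable)]
    have hBnull : volume (↑B : Set ℝ) = 0 := (Finset.countable_toSet B).measure_zero _
    have hae : (fun u => ∑ i ∈ F, (Set.Ioo (a i) (b i)).indicator (fun _ => (1:ℝ≥0∞)) u)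
        =ᵐ[volume] (Set.Ioo (0:ℝ) H).indicator (fun _ => (t : ℝ≥0∞)) := by
      have hsubB : {u : ℝ | ¬ (∑ i ∈ F, (Set.Ioo (a i) (b i)).indicator (fun _ => (1:ℝ≥0∞)) u
          = (Set.Ioo (0:ℝ) H).indicator (fun _ => (t : ℝ≥0∞)) u)} ⊆ ↑B := by
        intro u hu
        by_contra huB
        apply hu
        by_cases huH : u ∈ Set.Ioo (0:ℝ) H
        · rw [Set.indicator_of_mem huH]
          have : ∑ i ∈ F, (Set.Ioo (a i) (b i)).indicator (fun _ => (1:ℝ≥0∞)) u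
              = ((F.filter (fun i => u ∈ Set.Ioo (a i) (b i))).card : ℝ≥0∞) := by
            simp [Set.indicator_apply]
          rw [this, hcard u huH huB]
        · rw [Set.indicator_of_notMem huH]
          exact Finset.sum_eq_zero fun i hi =>
            Set.indicator_of_notMem (fun h => huH (hsub i hi h)) _
      exact MeasureTheory.ae_iff.2 (measure_mono_null hsubB hBnull)
    rw [lintegral_congr_ae hae, lintegral_indicator measurableSet_Ioo, setLIntegral_const,
      Real.volume_Ioo, sub_zero]
  rw [← ENNReal.ofReal_sum_of_nonneg (fun i hi => sub_nonneg.2 (hab i hi))] at key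
  have ht : ((t:ℝ≥0∞) * ENNReal.ofReal H) = ENNReal.ofReal ((t:ℝ)*H) := by
    rw [ENNReal.ofReal_mul (by positivity)]
    simp
  rw [ht] at key
  exact (ENNReal.ofReal_eq_ofReal_iff (Finset.sum_nonneg fun i hi => sub_nonneg.2 (hab i hi))
    (by positivity)).1 key

/-- Scanning argument: if the distinct module widths of a partition of `[0,W] × [0,H]`
are linearly independent over `ℚ`, then for each occurring width `x` the total height
of the modules of width `x` is a nonnegative integer multiple of `H`. -/
theorem scanning_argument (W H : ℝ) (hW : 0 < W) (hH : 0 < H) (k : ℕ)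
    (P : Fin k → Rect) (hpart : IsRectPartition W H P)
    (hind : LinearIndependent ℚ
      (fun x : (Set.range fun i => (P i).width : Set ℝ) => (x : ℝ)))
    (x : ℝ) (hx : ∃ i, (P i).width = x) :
    ∃ t : ℕ,
      (∑ i ∈ Finset.univ.filter (fun i => (P i).width = x), (P i).height) = (t : ℝ) * H := by
  classical
  obtain ⟨hnd, hdj, huniv⟩ := hpart
  have hsubcar : ∀ i, (P i).carrier ⊆ Set.Icc (0:ℝ) W ×ˢ Set.Icc (0:ℝ) H := by
    intro i
    rw [← huniv]
    exact Set.subset_iUnion (fun i => (P i).carrier) i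
  have hbound : ∀ i, 0 ≤ (P i).x1 ∧ (P i).x2 ≤ W ∧ 0 ≤ (P i).y1 ∧ (P i).y2 ≤ H := by
    intro i
    have h1 : ((P i).x1, (P i).y1) ∈ (P i).carrier :=
      ⟨⟨le_rfl, (hnd i).1.le⟩, ⟨le_rfl, (hnd i).2.le⟩⟩
    have h2 : ((P i).x2, (P i).y2) ∈ (P i).carrier :=
      ⟨⟨(hnd i).1.le, le_rfl⟩, ⟨(hnd i).2.le, le_rfl⟩⟩
    have b1 := hsubcar i h1
    have b2 := hsubcar i h2
    exact ⟨b1.1.1, b2.1.2, b1.2.1, b2.2.2⟩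
  set B : Finset ℝ :=
    Finset.univ.image (fun i => (P i).y1) ∪ Finset.univ.image (fun i => (P i).y2) with hB
  set C : ℝ → Finset (Fin k) :=
    fun y => Finset.univ.filter (fun i => (P i).y1 < y ∧ y < (P i).y2) with hCdef
  -- the horizontal line at a good height y is partitioned by the modules it crosses
  have hline : ∀ y ∈ Set.Ioo (0:ℝ) H, y ∉ (↑B : Set ℝ) → ∑ i ∈ C y, (P i).width = W := by
    intro y hy hyB
    have key := sum_length_of_cover (fun i => (P i).x1) (fun i => (P i).x2) (C y) 0 W hW.le
      (fun i _ => (hnd i).1.le)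
      (fun i _ u hu => ⟨(hbound i).1.trans hu.1.le, hu.2.le.trans (hbound i).2.1⟩)
      ?_ ?_
    · simpa [Rect.width] using key
    · -- cover
      intro u hu
      have hmem : (u, y) ∈ Set.Icc (0:ℝ) W ×ˢ Set.Icc (0:ℝ) H := ⟨hu, ⟨hy.1.le, hy.2.le⟩⟩
      rw [← huniv] at hmem
      obtain ⟨i, hi⟩ := Set.mem_iUnion.1 hmem
      obtain ⟨⟨ha1, ha2⟩, ⟨ha3, ha4⟩⟩ := hi
      have hy1 : (P i).y1 < y := ha3.lt_of_ne (fun h => hyB (by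
        simp only [hB, Finset.coe_union, Set.mem_union, Finset.coe_image, Set.mem_image]
        exact Or.inl ⟨i, by simp, h⟩))
      have hy2 : y < (P i).y2 := (lt_of_le_of_ne ha4 (fun h => hyB (by
        simp only [hB, Finset.coe_union, Set.mem_union, Finset.coe_image, Set.mem_image]
        exact Or.inr ⟨i, by simp, h.symm⟩)))
      have hiC : i ∈ C y := by simp [hCdef, hy1, hy2]
      by_cases hu1 : u = (P i).x1
      · exact Or.inr (by
          simp only [Finset.coe_union, Set.mem_union, Finset.coe_image, Set.mem_image]
          exact Or.inl ⟨i, hiC, hu1.symm⟩)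
      by_cases hu2 : u = (P i).x2
      · exact Or.inr (by
          simp only [Finset.coe_union, Set.mem_union, Finset.coe_image, Set.mem_image]
          exact Or.inr ⟨i, hiC, hu2.symm⟩)
      · exact Or.inl (Set.mem_biUnion hiC
          ⟨ha1.lt_of_ne (fun h => hu1 h.symm), ha2.lt_of_ne hu2⟩)
    · -- pairwise disjoint interiors on the line
      intro i hi j hj hij
      simp only [Function.onFun]
      rw [Set.disjoint_left]
      intro u hui huj
      have hiC := Finset.mem_filter.1 (Finset.mem_coe.1 hi)
      have hjC := Finset.mem_filter.1 (Finset.mem_coe.1 hj)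
      have hmem : (u, y) ∈ (P i).inner ∩ (P j).inner :=
        ⟨⟨hui, hiC.2.1, hiC.2.2⟩, ⟨huj, hjC.2.1, hjC.2.2⟩⟩
      rw [hdj i j hij] at hmem
      exact hmem
  -- grouping by widths
  set T : Finset ℝ := Finset.univ.image (fun i => (P i).width) with hT
  have hTr : (Set.range fun i => (P i).width) = (↑T : Set ℝ) := by
    simp [hT]
  rw [hTr] at hind
  have hgroup : ∀ y, ∑ i ∈ C y, (P i).width =
      ∑ b ∈ T, (((C y).filter (fun i => (P i).width = b)).card : ℝ) * b := by
    intro y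
    rw [← Finset.sum_fiberwise_of_maps_to'
      (g := fun i => (P i).width) (t := T)
      (fun i _ => Finset.mem_image.2 ⟨i, Finset.mem_univ _, rfl⟩) (fun b => b)]
    exact Finset.sum_congr rfl fun b _ => by rw [Finset.sum_const, nsmul_eq_mul]
  have hxT : x ∈ T := by
    obtain ⟨i, hi⟩ := hx
    exact Finset.mem_image.2 ⟨i, Finset.mem_univ _, hi⟩
  -- constancy of the count of width-x modules crossed
  have hconst : ∀ y ∈ Set.Ioo (0:ℝ) H, y ∉ (↑B : Set ℝ) → ∀ y' ∈ Set.Ioo (0:ℝ) H,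
      y' ∉ (↑B : Set ℝ) →
      ((C y).filter (fun i => (P i).width = x)).card
        = ((C y').filter (fun i => (P i).width = x)).card := by
    intro y hy hyB y' hy' hyB'
    set g : ℝ → ℚ := fun b => (((C y).filter (fun i => (P i).width = b)).card : ℚ)
        - (((C y').filter (fun i => (P i).width = b)).card : ℚ) with hg
    have hsum0 : ∑ b : (↑T : Set ℝ), g ↑b • (↑b : ℝ) = 0 := by
      rw [Finset.sum_finset_coe (f := fun b => g b • (b : ℝ))]
      have : ∀ b ∈ T, g b • (b : ℝ)
          = (((C y).filter (fun i => (P i).width = b)).card : ℝ) * b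
            - (((C y').filter (fun i => (P i).width = b)).card : ℝ) * b := by
        intro b _
        rw [Rat.smul_def, hg]
        push_cast
        ring
      rw [Finset.sum_congr rfl this, Finset.sum_sub_distrib, ← hgroup, ← hgroup,
        hline y hy hyB, hline y' hy' hyB', sub_self]
    have h0 := Fintype.linearIndependent_iff.1 hind (fun b => g ↑b) hsum0 ⟨x, hxT⟩
    have : (((C y).filter (fun i => (P i).width = x)).card : ℚ)
        = (((C y').filter (fun i => (P i).width = x)).card : ℚ) := by
      have := sub_eq_zero.1 h0
      exact_mod_cast this
    exact_mod_cast this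
  -- pick a good height
  obtain ⟨y₀, hy₀⟩ : ∃ y₀, y₀ ∈ Set.Ioo (0:ℝ) H \ (↑B : Set ℝ) :=
    ((Set.Ioo_infinite hH).diff (B.finite_toSet)).nonempty
  refine ⟨((C y₀).filter (fun i => (P i).width = x)).card, ?_⟩
  have key := sum_length_eq_card_mul (fun i => (P i).y1) (fun i => (P i).y2)
    (Finset.univ.filter (fun i => (P i).width = x)) H hH.le
    (((C y₀).filter (fun i => (P i).width = x)).card) B
    (fun i _ => (hnd i).2.le)
    (fun i _ u hu => ⟨(hbound i).2.2.1.trans_lt hu.1, hu.2.trans_le (hbound i).2.2.2⟩)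
    ?_
  · simpa [Rect.height] using key
  · intro u hu huB
    have hEq : (Finset.univ.filter (fun i => (P i).width = x)).filter
        (fun i => u ∈ Set.Ioo (P i).y1 (P i).y2)
        = (C u).filter (fun i => (P i).width = x) := by
      ext i
      simp only [Finset.mem_filter, Finset.mem_univ, true_and, hCdef, Set.mem_Ioo]
      tauto
    rw [hEq]
    exact hconst u hu huB y₀ hy₀.1 hy₀.2
end

section
/- (Same-ratio lemma for equivalent pattern pairs.) Let (M₁,…,M_k) and (N₁,…,N_k) be two patterns of size k (possibly with different grid dimensions). Let p, q, p', q' be positive reals. Suppose there are: a realization of (M₁,…,M_k) with horizontal side p and vertical side q yielding module dimensions (lᵢ, hᵢ); a realization of (N₁,…,N_k) with horizontal side q and vertical side p yielding module dimensions (l̂ᵢ, ĥᵢ) with lᵢ = l̂ᵢ and hᵢ = ĥᵢ for every i; a realization of (M₁,…,M_k) with horizontal side p' and vertical side q' yielding module dimensions (l'ᵢ, h'ᵢ); and a realization of (N₁,…,N_k) with horizontal side q' and vertical side p' yielding module dimensions (l̂'ᵢ, ĥ'ᵢ) with l'ᵢ = l̂'ᵢ and h'ᵢ = ĥ'ᵢ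 for every i. Then p·q' = p'·q, i.e., p/q = p'/q'. -/
/-- A pattern of size `k` with grid dimensions `r × c`, recorded by the row supports
`R i` and column supports `C i` of the rank-one 0–1 matrices `Mᵢ`: each support
`R i ×ˢ C i` is nonempty, and every grid cell lies in exactly one module. -/
def IsPattern {k r c : ℕ} (R : Fin k → Finset (Fin r)) (C : Fin k → Finset (Fin c)) : Prop :=
  (∀ i, (R i).Nonempty ∧ (C i).Nonempty) ∧
  ∀ (u : Fin r) (v : Fin c), ∃! i : Fin k, u ∈ R i ∧ v ∈ C i

/-- A realization of a pattern with horizontal side `P` and vertical side `Q`: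
positive column widths `α` summing to `P` and positive row heights `β` summing to `Q`,
with the `i`-th module having width `l i = ∑ v ∈ C i, α v` and height
`h i = ∑ u ∈ R i, β u`. -/
def Realizes {k r c : ℕ} (R : Fin k → Finset (Fin r)) (C : Fin k → Finset (Fin c))
    (P Q : ℝ) (l h : Fin k → ℝ) : Prop :=
  ∃ (α : Fin c → ℝ) (β : Fin r → ℝ),
    (∀ v, 0 < α v) ∧ (∀ u, 0 < β u) ∧
    (∑ v, α v) = P ∧ (∑ u, β u) = Q ∧
    (∀ i, l i = ∑ v ∈ C i, α v) ∧ (∀ i, h i = ∑ u ∈ R i, β u)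

lemma pattern_sum_key {k r c : ℕ} (R : Fin k → Finset (Fin r)) (C : Fin k → Finset (Fin c))
    (hP : ∀ (u : Fin r) (v : Fin c), ∃! i : Fin k, u ∈ R i ∧ v ∈ C i)
    (α : Fin c → ℝ) (β : Fin r → ℝ) :
    ∑ i, (∑ v ∈ C i, α v) * (∑ u ∈ R i, β u) = (∑ v, α v) * (∑ u, β u) := by
  have lhs : ∀ i : Fin k, (∑ v ∈ C i, α v) * (∑ u ∈ R i, β u)
      = ∑ v, ∑ u, if u ∈ R i ∧ v ∈ C i then α v * β u else 0 := by
    intro i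
    rw [show (∑ v ∈ C i, α v) = ∑ v, if v ∈ C i then α v else 0 by
        simp [Finset.sum_ite_mem],
      show (∑ u ∈ R i, β u) = ∑ u, if u ∈ R i then β u else 0 by
        simp [Finset.sum_ite_mem],
      Finset.sum_mul_sum]
    refine Finset.sum_congr rfl fun v _ => Finset.sum_congr rfl fun u _ => ?_
    by_cases hv : v ∈ C i <;> by_cases hu : u ∈ R i <;> simp [hv, hu]
  simp_rw [lhs]
  rw [Finset.sum_comm]
  rw [Finset.sum_mul_sum]
  refine Finset.sum_congr rfl fun v _ => ?_
  rw [Finset.sum_comm]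
  refine Finset.sum_congr rfl fun u _ => ?_
  obtain ⟨i₀, hi₀, huniq⟩ := hP u v
  rw [Finset.sum_eq_single i₀]
  · simp [hi₀]
  · intro j _ hj
    simp only [ite_eq_right_iff]
    intro hjm
    exact absurd (huniq j hjm) hj
  · simp

/-- Same-ratio lemma: if a pair of patterns realizes both `SIRTP(p,q)` and
`SIRTP(p',q')` (with matching module dimensions), then `p/q = p'/q'`. -/
theorem same_ratio_of_equivalent_patterns
    (k r c r' c' : ℕ)
    (R : Fin k → Finset (Fin r)) (C : Fin k → Finset (Fin c))
    (R' : Fin k → Finset (Fin r')) (C' : Fin k → Finset (Fin c'))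
    (hM : IsPattern R C) (hN : IsPattern R' C')
    (p q p' q' : ℝ) (hp : 0 < p) (hq : 0 < q) (hp' : 0 < p') (hq' : 0 < q')
    (l h l' h' : Fin k → ℝ)
    (h1 : Realizes R C p q l h)
    (h2 : Realizes R' C' q p l h)
    (h3 : Realizes R C p' q' l' h')
    (h4 : Realizes R' C' q' p' l' h') :
    p * q' = p' * q := by
  obtain ⟨α1, β1, -, -, hα1, hβ1, hl1, hh1⟩ := h1
  obtain ⟨α2, β2, -, -, hα2, hβ2, hl2, hh2⟩ := h2
  obtain ⟨α3, β3, -, -, hα3, hβ3, hl3, hh3⟩ := h3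
  obtain ⟨α4, β4, -, -, hα4, hβ4, hl4, hh4⟩ := h4
  have eM : ∑ i, l i * h' i = p * q' := by
    have := pattern_sum_key R C hM.2 α1 β3
    simp_rw [← hl1, ← hh3, hα1, hβ3] at this
    exact this
  have eN : ∑ i, l i * h' i = q * p' := by
    have := pattern_sum_key R' C' hN.2 α2 β4
    simp_rw [← hl2, ← hh4, hα2, hβ4] at this
    exact this
  rw [eM] at eN
  linarith
end
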